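/- For real numbers a, b > 0 and c1, c2 with a + b > |c1 - c2|, the function E(r) = (ωa/2)[a cosh²(r) + b sinh²(r)] + (ωb/2)[b cosh²(r) + a sinh²(r)] + ((ωa+ωb)/4)[(c1 - c2) sinh(2r) - 1], with ωa, ωb > 0, attains its unique global minimum at r = -(1/2) artanh((c1 - c2)/(a + b)). -/

import Mathlib

/-! The energy is `(ωa + ωb)/4 * ((a + b) cosh 2r + (c₁ - c₂) sinh 2r)` up to an additive
constant, and `A cosh t + c sinh t` with `|c| < A` is a positive multiple of `cosh (t + u)` for
`u = artanh (c / A)`, since `c / A = tanh u`. Hence the energy is minimal exactly where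
`2 r + u = 0`. -/

/-- The real inverse hyperbolic tangent, `artanh x = (1/2) * log ((1+x)/(1-x))`. -/
noncomputable def artanh (x : ℝ) : ℝ := 1 / 2 * Real.log ((1 + x) / (1 - x))

/-- Energy after two-mode squeezing with parameter `r`. -/
noncomputable def tmsEnergy (ωa ωb a b c₁ c₂ r : ℝ) : ℝ :=
  ωa / 2 * (a * Real.cosh r ^ 2 + b * Real.sinh r ^ 2)
    + ωb / 2 * (b * Real.cosh r ^ 2 + a * Real.sinh r ^ 2)
    + (ωa + ωb) / 4 * ((c₁ - c₂) * Real.sinh (2 * r) - 1)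

open Real hiding artanh
open Set

theorem div_mem_Ioo_of_abs_lt {c A : ℝ} (hc : |c| < A) : c / A ∈ Ioo (-1) 1 := by
  have hA : 0 < A := (abs_nonneg c).trans_lt hc
  rwa [mem_Ioo, ← abs_lt, abs_div, abs_of_pos hA, div_lt_one hA]

theorem cosh_add_eq_cosh_mul (t u : ℝ) : cosh (t + u) = cosh u * (cosh t + tanh u * sinh t) := by
  rw [cosh_add, tanh_eq_sinh_div_cosh]
  field_simp [(cosh_pos u).ne']

theorem mul_cosh_add_mul_sinh_neg_artanh_lt {A c t : ℝ} (hc : |c| < A)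
    (ht : t ≠ -Real.artanh (c / A)) :
    A * cosh (-Real.artanh (c / A)) + c * sinh (-Real.artanh (c / A))
      < A * cosh t + c * sinh t := by
  have hA : 0 < A := (abs_nonneg c).trans_lt hc
  set u := Real.artanh (c / A)
  have hc_tanh : c = A * tanh u := by
    rw [Real.tanh_artanh (div_mem_Ioo_of_abs_lt hc), mul_div_cancel₀ c hA.ne']
  have hshift (s : ℝ) : A * cosh s + c * sinh s = A / cosh u * cosh (s + u) := by
    rw [cosh_add_eq_cosh_mul, hc_tanh]
    field_simp [(cosh_pos u).ne']
  rw [hshift, hshift, neg_add_cancel, cosh_zero]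
  have hlt : 1 < cosh (t + u) := one_lt_cosh.mpr fun h ↦ ht (eq_neg_of_add_eq_zero_left h)
  gcongr

theorem tmsEnergy_eq (ωa ωb a b c₁ c₂ r : ℝ) :
    tmsEnergy ωa ωb a b c₁ c₂ r =
      (ωa + ωb) / 4 * ((a + b) * cosh (2 * r) + (c₁ - c₂) * sinh (2 * r))
        + ((ωa - ωb) * (a - b) - (ωa + ωb)) / 4 := by
  rw [tmsEnergy, cosh_two_mul, cosh_sq r]
  ring

-- Mathlib's `Real.artanh x = log √((1 + x) / (1 - x))` differs outside `[-1, 1]`.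
theorem artanh_eq_real_artanh {x : ℝ} (hx : x ∈ Icc (-1) 1) : artanh x = Real.artanh x :=
  (Real.artanh_eq_half_log hx).symm

theorem tmsEnergy_unique_global_min_general (ωa ωb a b c₁ c₂ : ℝ)
    (hωa : 0 < ωa) (hωb : 0 < ωb)
    (hc : |c₁ - c₂| < a + b) :
    ∀ r : ℝ,
      tmsEnergy ωa ωb a b c₁ c₂ (-(1 / 2) * artanh ((c₁ - c₂) / (a + b)))
        ≤ tmsEnergy ωa ωb a b c₁ c₂ r ∧
      (tmsEnergy ωa ωb a b c₁ c₂ r =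
        tmsEnergy ωa ωb a b c₁ c₂ (-(1 / 2) * artanh ((c₁ - c₂) / (a + b)))
        → r = -(1 / 2) * artanh ((c₁ - c₂) / (a + b))) := by
  set r₀ := -(1 / 2) * artanh ((c₁ - c₂) / (a + b)) with hr₀_def
  have hr₀ : 2 * r₀ = -Real.artanh ((c₁ - c₂) / (a + b)) := by
    rw [hr₀_def, artanh_eq_real_artanh (Ioo_subset_Icc_self (div_mem_Ioo_of_abs_lt hc))]
    ring
  have hlt (r : ℝ) (hr : r ≠ r₀) :
      tmsEnergy ωa ωb a b c₁ c₂ r₀ < tmsEnergy ωa ωb a b c₁ c₂ r := by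
    have h2r : 2 * r ≠ -Real.artanh ((c₁ - c₂) / (a + b)) := by
      rw [← hr₀]; exact fun h ↦ hr (by linarith)
    rw [tmsEnergy_eq, tmsEnergy_eq, hr₀]
    gcongr (ωa + ωb) / 4 * ?_ + _
    exact mul_cosh_add_mul_sinh_neg_artanh_lt hc h2r
  intro r
  refine ⟨?_, fun heq ↦ by_contra fun hr ↦ (hlt r hr).ne' heq⟩
  rcases eq_or_ne r r₀ with rfl | hr
  · exact le_rfl
  · exact (hlt r hr).le

/-- The two-mode squeezing energy attains its unique global minimum at
`r = -(1/2) * artanh ((c₁ - c₂)/(a + b))`. -/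
theorem tmsEnergy_unique_global_min (ωa ωb a b c₁ c₂ : ℝ)
    (hωa : 0 < ωa) (hωb : 0 < ωb) (ha : 0 < a) (hb : 0 < b)
    (hc : |c₁ - c₂| < a + b) :
    ∀ r : ℝ,
      tmsEnergy ωa ωb a b c₁ c₂ (-(1 / 2) * artanh ((c₁ - c₂) / (a + b)))
        ≤ tmsEnergy ωa ωb a b c₁ c₂ r ∧
      (tmsEnergy ωa ωb a b c₁ c₂ r =
        tmsEnergy ωa ωb a b c₁ c₂ (-(1 / 2) * artanh ((c₁ - c₂) / (a + b)))
        → r = -(1 / 2) * artanh ((c₁ - c₂) / (a + b))) :=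
  tmsEnergy_unique_global_min_general ωa ωb a b c₁ c₂ hωa hωb hc
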